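/- Let n ≥ 2 be an integer and let f : [0,1] → ℝ^{n−1} be Lipschitz with Lipschitz constant 1/10. Write P(t) = (t, f(t)) ∈ ℝ^n and define Z = {(x_1, x_2, x_3) ∈ [0,1]^3 : x_1, x_2, x_3 pairwise distinct and ‖P(x_3) − P(x_1)‖ = ‖P(x_3) − P(x_2)‖}. Then there is a constant C depending only on n such that for every dyadic length δ ∈ (0,1), every integer k ≥ 0, and all intervals I_1, I_2 ∈ B_δ^1 contained in [0,1) with dist(I_1, I_2) ≥ 2^k δ, the number of intervals I_3 ∈ B_δ^1 such that (I_1 × I_2 × I_3) ∩ Z ≠ ∅ is at most C·(2^{−k}·δ^{−1} + 1). -/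

import Mathlib

open Filter Set

noncomputable section

/-- A dyadic length: a real number of the form `2 ^ (-k)` for a natural number `k`. -/
def IsDyadicLength (l : ℝ) : Prop := ∃ k : ℕ, l = (2 : ℝ) ^ (-(k : ℤ))

/-- The half-open dyadic cube of sidelength `l` with corner `l • m`. -/
def dyadicCube {ι : Type*} (l : ℝ) (m : ι → ℤ) : Set (ι → ℝ) :=
  {x | ∀ i, l * (m i : ℝ) ≤ x i ∧ x i < l * ((m i : ℝ) + 1)}

/-- The (indices of the) cubes of `B_l` that intersect `E`. -/
def cubesMeeting {ι : Type*} (l : ℝ) (E : Set (ι → ℝ)) : Set (ι → ℤ) :=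
  {m | (dyadicCube l m ∩ E).Nonempty}

/-- `#B_l(E)`, the number of cubes of sidelength `l` meeting `E`. -/
def cubeCount {ι : Type*} (l : ℝ) (E : Set (ι → ℝ)) : ℕ :=
  (cubesMeeting l E).ncard

/-- `E` is a union of cubes of `B_l`. -/
def IsCubeUnion {ι : Type*} (l : ℝ) (E : Set (ι → ℝ)) : Prop :=
  ∃ S : Set (ι → ℤ), E = ⋃ m ∈ S, dyadicCube l m

/-- Lower Minkowski dimension, computed along dyadic scales. -/
def lowerMinkDim {ι : Type*} (Z : Set (ι → ℝ)) : ℝ :=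
  Filter.atTop.liminf fun k : ℕ =>
    Real.log (cubeCount ((2 : ℝ) ^ (-(k : ℤ))) Z) / (k * Real.log 2)

/-- The unit cube `[0,1)^d`. -/
def unitCube (d : ℕ) : Set (Fin d → ℝ) := {x | ∀ i, x i ∈ Set.Ico (0 : ℝ) 1}

/-- `X^n`, viewed inside `ℝ^{dn} = (Fin n × Fin d → ℝ)`. -/
def nthPower {d n : ℕ} (X : Set (Fin d → ℝ)) : Set (Fin n × Fin d → ℝ) :=
  {y | ∀ j, (fun i => y (j, i)) ∈ X}

/-- The point `(x_1, …, x_n) ∈ ℝ^{dn}` built from `x_1, …, x_n ∈ ℝ^d`. -/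
def tuple {d n : ℕ} (x : Fin n → Fin d → ℝ) : Fin n × Fin d → ℝ := fun p => x p.1 p.2

/-- The `j`-th factor of a cube index in `B_l^{dn}`. -/
def cubeRow {d n : ℕ} (M : Fin n × Fin d → ℤ) (j : Fin n) : Fin d → ℤ := fun i => M (j, i)

/-- A cube of `B_l^{dn}` is strongly non-diagonal if its `n` factors are pairwise distinct. -/
def StronglyNonDiagonal {d n : ℕ} (M : Fin n × Fin d → ℤ) : Prop :=
  Function.Injective (cubeRow M)

/-- The point `(t, f t) ∈ ℝ^{m+1}` on the graph of `f : ℝ → ℝ^m`. -/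
def graphPoint {m : ℕ} (f : ℝ → EuclideanSpace ℝ (Fin m)) (t : ℝ) :
    EuclideanSpace ℝ (Fin (m + 1)) :=
  (WithLp.equiv 2 (Fin (m + 1) → ℝ)).symm (Fin.cons t (WithLp.equiv 2 (Fin m → ℝ) (f t)))

/-- The set of triples `(x₁, x₂, x₃) ∈ [0,1]³` of pairwise distinct points whose images on
the graph of `f` form the vertices of an isosceles triangle (apex at the third point). -/
def isoTriples {m : ℕ} (f : ℝ → EuclideanSpace ℝ (Fin m)) : Set (Fin 3 → ℝ) :=
  {x | (∀ i, x i ∈ Set.Icc (0 : ℝ) 1) ∧ x 0 ≠ x 1 ∧ x 0 ≠ x 2 ∧ x 1 ≠ x 2 ∧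
    ‖graphPoint f (x 2) - graphPoint f (x 0)‖ = ‖graphPoint f (x 2) - graphPoint f (x 1)‖}


/-! If `(s₁, u₁, t₁)` and `(s₂, u₂, t₂)` are isosceles triples on the graph `P` of `f` with
`sᵢ ∈ I₁` and `uᵢ ∈ I₂`, subtracting the two equations `‖P t - P s‖² = ‖P t - P u‖²` bounds
`⟪P t₂ - P t₁, P u₁ - P s₁⟫` by `O(δ)`. As `f` is `1/10`-Lipschitz, this inner product is
comparable to `(t₂ - t₁) (u₁ - s₁)`, and `|u₁ - s₁| ≥ 2^k δ`; so every admissible apex lies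
within `O(2^{-k})` of a fixed one, and such a window meets `O(2^{-k} δ⁻¹ + 1)` intervals of
`B_δ`. -/

open scoped RealInnerProductSpace

section InnerProduct

variable {E : Type*} [NormedAddCommGroup E] [InnerProductSpace ℝ E]

lemma two_inner_apex_sub_eq_of_isosceles {s₁ u₁ t₁ s₂ u₂ t₂ : E}
    (h₁ : ‖t₁ - s₁‖ = ‖t₁ - u₁‖) (h₂ : ‖t₂ - s₂‖ = ‖t₂ - u₂‖) :
    2 * ⟪t₂ - t₁, u₁ - s₁⟫ =
      ⟪s₂ - s₁, t₂ - s₁⟫ + ⟪s₂ - s₁, t₂ - s₂⟫ - ⟪u₂ - u₁, t₂ - u₁⟫ - ⟪u₂ - u₁, t₂ - u₂⟫ := by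
  have h₁' : ⟪t₁ - s₁, t₁ - s₁⟫ = ⟪t₁ - u₁, t₁ - u₁⟫ := by
    rw [real_inner_self_eq_norm_sq, real_inner_self_eq_norm_sq, h₁]
  have h₂' : ⟪t₂ - s₂, t₂ - s₂⟫ = ⟪t₂ - u₂, t₂ - u₂⟫ := by
    rw [real_inner_self_eq_norm_sq, real_inner_self_eq_norm_sq, h₂]
  simp only [inner_sub_left, inner_sub_right] at h₁' h₂' ⊢
  linarith [real_inner_comm s₂ s₁, real_inner_comm u₂ u₁, real_inner_comm t₂ s₁,
    real_inner_comm t₂ s₂, real_inner_comm t₂ u₁, real_inner_comm t₂ u₂,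
    real_inner_comm t₁ s₁, real_inner_comm t₁ u₁, real_inner_comm t₂ t₁, real_inner_comm u₁ s₁]

lemma abs_inner_sub_le_of_lipschitzOnWith {α : Type*} [PseudoMetricSpace α] {K : NNReal}
    {f : α → E} {s : Set α} (hf : LipschitzOnWith K f s) {a b c d : α}
    (ha : a ∈ s) (hb : b ∈ s) (hc : c ∈ s) (hd : d ∈ s) :
    |⟪f a - f b, f c - f d⟫| ≤ K ^ 2 * (dist a b * dist c d) := by
  have hab : ‖f a - f b‖ ≤ K * dist a b := by
    simpa only [dist_eq_norm] using hf.dist_le_mul a ha b hb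
  have hcd : ‖f c - f d‖ ≤ K * dist c d := by
    simpa only [dist_eq_norm] using hf.dist_le_mul c hc d hd
  calc |⟪f a - f b, f c - f d⟫| ≤ ‖f a - f b‖ * ‖f c - f d‖ := abs_real_inner_le_norm _ _
    _ ≤ (K * dist a b) * (K * dist c d) := by gcongr
    _ = K ^ 2 * (dist a b * dist c d) := by ring

end InnerProduct

section GraphPoint

variable {m : ℕ} (f : ℝ → EuclideanSpace ℝ (Fin m))

lemma inner_graphPoint_sub (a b c d : ℝ) :
    ⟪graphPoint f a - graphPoint f b, graphPoint f c - graphPoint f d⟫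
      = (a - b) * (c - d) + ⟪f a - f b, f c - f d⟫ := by
  simp only [PiLp.inner_apply, RCLike.inner_apply, conj_trivial, PiLp.sub_apply]
  simp [graphPoint, Fin.sum_univ_succ]
  ring

lemma norm_graphPoint_sub_le (a b : ℝ) :
    ‖graphPoint f a - graphPoint f b‖ ≤ |a - b| + ‖f a - f b‖ := by
  have hsq : ‖graphPoint f a - graphPoint f b‖ ^ 2 = (a - b) ^ 2 + ‖f a - f b‖ ^ 2 := by
    rw [← real_inner_self_eq_norm_sq, inner_graphPoint_sub, real_inner_self_eq_norm_sq]; ring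
  refine (pow_le_pow_iff_left₀ (norm_nonneg _) (by positivity) two_ne_zero).mp ?_
  rw [hsq, add_sq, sq_abs]
  nlinarith [abs_nonneg (a - b), norm_nonneg (f a - f b)]

lemma norm_graphPoint_sub_le_of_lipschitzOnWith {K : NNReal} {s : Set ℝ}
    (hf : LipschitzOnWith K f s) {a b : ℝ} (ha : a ∈ s) (hb : b ∈ s) :
    ‖graphPoint f a - graphPoint f b‖ ≤ (1 + K) * |a - b| := by
  have hfab : ‖f a - f b‖ ≤ K * |a - b| := by
    simpa only [dist_eq_norm, Real.norm_eq_abs] using hf.dist_le_mul a ha b hb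
  linarith [norm_graphPoint_sub_le f a b]

end GraphPoint

lemma abs_sub_le_of_mem_Ico {x y s t : ℝ} (hs : s ∈ Set.Ico x y) (ht : t ∈ Set.Ico x y) :
    |s - t| ≤ y - x :=
  abs_sub_le_iff.mpr ⟨by linarith [hs.2, ht.1], by linarith [hs.1, ht.2]⟩

section IsoTriples

variable {m : ℕ} {f : ℝ → EuclideanSpace ℝ (Fin m)}

lemma abs_inner_graphPoint_sub_le (hf : LipschitzOnWith (1 / 10) f (Set.Icc 0 1)) {δ a b c d : ℝ}
    (ha : a ∈ Set.Icc (0 : ℝ) 1) (hb : b ∈ Set.Icc (0 : ℝ) 1) (hc : c ∈ Set.Icc (0 : ℝ) 1)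
    (hd : d ∈ Set.Icc (0 : ℝ) 1) (hab : |a - b| ≤ δ) :
    |⟪graphPoint f a - graphPoint f b, graphPoint f c - graphPoint f d⟫| ≤ 2 * δ := by
  have hcd : |c - d| ≤ 1 :=
    abs_sub_le_iff.mpr ⟨by linarith [hc.2, hd.1], by linarith [hc.1, hd.2]⟩
  have hPab := norm_graphPoint_sub_le_of_lipschitzOnWith f hf ha hb
  have hPcd := norm_graphPoint_sub_le_of_lipschitzOnWith f hf hc hd
  push_cast at hPab hPcd
  calc _ ≤ ‖graphPoint f a - graphPoint f b‖ * ‖graphPoint f c - graphPoint f d‖ :=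
        abs_real_inner_le_norm _ _
    _ ≤ ((1 + 1 / 10) * δ) * ((1 + 1 / 10) * 1) := by
        have : 0 ≤ δ := (abs_nonneg _).trans hab
        gcongr
        · exact hPab.trans (by gcongr)
        · exact hPcd.trans (by gcongr)
    _ ≤ 2 * δ := by nlinarith [(abs_nonneg _).trans hab]

lemma abs_sub_mul_abs_sub_le_of_mem_isoTriples (hf : LipschitzOnWith (1 / 10) f (Set.Icc 0 1))
    {δ : ℝ} {x y : Fin 3 → ℝ} (hx : x ∈ isoTriples f) (hy : y ∈ isoTriples f)
    (h₀ : |y 0 - x 0| ≤ δ) (h₁ : |y 1 - x 1| ≤ δ) :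
    |y 2 - x 2| * |x 1 - x 0| ≤ 5 * δ := by
  set P := graphPoint f
  have hx' := hx.1
  have hy' := hy.1
  have hP : |⟪P (y 2) - P (x 2), P (x 1) - P (x 0)⟫| ≤ 4 * δ := by
    have hid := two_inner_apex_sub_eq_of_isosceles hx.2.2.2.2 hy.2.2.2.2
    obtain ⟨l₁, r₁⟩ := abs_le.mp (abs_inner_graphPoint_sub_le hf (hy' 0) (hx' 0) (hy' 2) (hx' 0) h₀)
    obtain ⟨l₂, r₂⟩ := abs_le.mp (abs_inner_graphPoint_sub_le hf (hy' 0) (hx' 0) (hy' 2) (hy' 0) h₀)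
    obtain ⟨l₃, r₃⟩ := abs_le.mp (abs_inner_graphPoint_sub_le hf (hy' 1) (hx' 1) (hy' 2) (hx' 1) h₁)
    obtain ⟨l₄, r₄⟩ := abs_le.mp (abs_inner_graphPoint_sub_le hf (hy' 1) (hx' 1) (hy' 2) (hy' 1) h₁)
    exact abs_le.mpr ⟨by linarith, by linarith⟩
  have hf' := abs_inner_sub_le_of_lipschitzOnWith hf (hy' 2) (hx' 2) (hx' 1) (hx' 0)
  rw [Real.dist_eq, Real.dist_eq] at hf'
  push_cast at hf'
  rw [inner_graphPoint_sub] at hP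
  have htri := abs_sub ((y 2 - x 2) * (x 1 - x 0) + ⟪f (y 2) - f (x 2), f (x 1) - f (x 0)⟫)
    ⟪f (y 2) - f (x 2), f (x 1) - f (x 0)⟫
  rw [add_sub_cancel_right, abs_mul] at htri
  nlinarith [abs_nonneg (y 2 - x 2), abs_nonneg (x 1 - x 0)]

lemma abs_sub_le_of_mem_isoTriples (hf : LipschitzOnWith (1 / 10) f (Set.Icc 0 1))
    {δ : ℝ} (hδ : 0 < δ) (k : ℕ) {x y : Fin 3 → ℝ} (hx : x ∈ isoTriples f) (hy : y ∈ isoTriples f)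
    (h₀ : |y 0 - x 0| ≤ δ) (h₁ : |y 1 - x 1| ≤ δ) (hsep : 2 ^ k * δ ≤ |x 1 - x 0|) :
    |y 2 - x 2| ≤ 5 * (2 : ℝ) ^ (-(k : ℤ)) := by
  have h := (mul_le_mul_of_nonneg_left hsep (abs_nonneg _)).trans
    (abs_sub_mul_abs_sub_le_of_mem_isoTriples hf hx hy h₀ h₁)
  rw [zpow_neg, zpow_natCast, ← div_eq_mul_inv, le_div_iff₀ (by positivity)]
  nlinarith

end IsoTriples

lemma ncard_le_of_forall_mem_Ico_abs_sub_le {δ R t₀ : ℝ} (hδ : 0 < δ) (hR : 0 ≤ R) {S : Set ℤ}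
    (hS : ∀ c ∈ S, ∃ t ∈ Set.Ico (δ * c) (δ * (c + 1)), |t - t₀| ≤ R) :
    (S.ncard : ℝ) ≤ 2 * R / δ + 2 := by
  set L : ℤ := ⌈(t₀ - R) / δ⌉ - 1
  set U : ℤ := ⌊(t₀ + R) / δ⌋
  have hsub : S ⊆ Set.Icc L U := by
    intro c hc
    obtain ⟨t, ⟨hct, htc⟩, htt₀⟩ := hS c hc
    obtain ⟨hlo, hhi⟩ := abs_le.mp htt₀
    constructor
    · have : (t₀ - R) / δ ≤ (c : ℝ) + 1 := by rw [div_le_iff₀ hδ]; linarith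
      have := Int.ceil_le.mpr (by exact_mod_cast this)
      omega
    · exact Int.le_floor.mpr (by rw [le_div_iff₀ hδ]; linarith)
  have hU : (U : ℝ) ≤ (t₀ + R) / δ := Int.floor_le _
  have hL : (t₀ - R) / δ - 1 ≤ (L : ℝ) := by
    have := Int.le_ceil ((t₀ - R) / δ)
    push_cast [L]; linarith
  have hspan : (t₀ + R) / δ - (t₀ - R) / δ = 2 * R / δ := by ring
  have hRδ : 0 ≤ 2 * R / δ := by positivity
  calc (S.ncard : ℝ) ≤ (Set.Icc L U).ncard := by
        exact_mod_cast Set.ncard_le_ncard hsub (Set.finite_Icc L U)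
    _ = ((max (U + 1 - L) 0 : ℤ) : ℝ) := by
        rw [← Finset.coe_Icc, Set.ncard_coe_finset, Int.card_Icc, ← Int.toNat_eq_max]; rfl
    _ ≤ 2 * R / δ + 2 := by
        push_cast
        exact max_le (by linarith) (by linarith)

/-- Here `n = m + 1`, `I₁ = [δa, δ(a+1))`, `I₂ = [δb, δ(b+1))`, `I₃ = [δc, δ(c+1))`. -/
theorem isoTriples_slab_count_general (m : ℕ) :
    ∃ C : ℝ, 0 < C ∧
      ∀ f : ℝ → EuclideanSpace ℝ (Fin m), LipschitzOnWith (1 / 10) f (Set.Icc 0 1) →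
      ∀ δ : ℝ, IsDyadicLength δ → δ < 1 →
      ∀ k : ℕ, ∀ a b : ℤ,
        Set.Ico (δ * a) (δ * (a + 1)) ⊆ Set.Ico (0 : ℝ) 1 →
        Set.Ico (δ * b) (δ * (b + 1)) ⊆ Set.Ico (0 : ℝ) 1 →
        (∀ s ∈ Set.Ico (δ * a) (δ * (a + 1)), ∀ t ∈ Set.Ico (δ * b) (δ * (b + 1)),
          (2 : ℝ) ^ k * δ ≤ |s - t|) →
        ({c : ℤ | ∃ x ∈ isoTriples f, x 0 ∈ Set.Ico (δ * a) (δ * (a + 1)) ∧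
            x 1 ∈ Set.Ico (δ * b) (δ * (b + 1)) ∧
            x 2 ∈ Set.Ico (δ * c) (δ * (c + 1))}.ncard : ℝ) ≤
          C * ((2 : ℝ) ^ (-(k : ℤ)) * δ⁻¹ + 1) := by
  refine ⟨10, by norm_num, fun f hf δ ⟨j, hj⟩ _ k a b _ _ hsep => ?_⟩
  have hδ : 0 < δ := hj ▸ by positivity
  have hwidth (z : ℤ) : δ * (z + 1) - δ * z = δ := by ring
  set S := {c : ℤ | ∃ x ∈ isoTriples f, x 0 ∈ Set.Ico (δ * a) (δ * (a + 1)) ∧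
    x 1 ∈ Set.Ico (δ * b) (δ * (b + 1)) ∧ x 2 ∈ Set.Ico (δ * c) (δ * (c + 1))}
  rcases S.eq_empty_or_nonempty with hS | ⟨-, x, hx, hx₀, hx₁, -⟩
  · rw [hS, Set.ncard_empty, Nat.cast_zero]; positivity
  have hnear : ∀ c ∈ S, ∃ t ∈ Set.Ico (δ * c) (δ * (c + 1)),
      |t - x 2| ≤ 5 * (2 : ℝ) ^ (-(k : ℤ)) := by
    rintro c ⟨y, hy, hy₀, hy₁, hy₂⟩
    refine ⟨y 2, hy₂, abs_sub_le_of_mem_isoTriples hf hδ k hx hy ?_ ?_ ?_⟩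
    · exact (abs_sub_le_of_mem_Ico hy₀ hx₀).trans_eq (hwidth a)
    · exact (abs_sub_le_of_mem_Ico hy₁ hx₁).trans_eq (hwidth b)
    · exact abs_sub_comm (x 0) (x 1) ▸ hsep _ hx₀ _ hx₁
  calc (S.ncard : ℝ) ≤ 2 * (5 * (2 : ℝ) ^ (-(k : ℤ))) / δ + 2 :=
        ncard_le_of_forall_mem_Ico_abs_sub_le hδ (by positivity) hnear
    _ = 10 * ((2 : ℝ) ^ (-(k : ℤ)) * δ⁻¹ + 1) - 8 := by ring
    _ ≤ 10 * ((2 : ℝ) ^ (-(k : ℤ)) * δ⁻¹ + 1) := by linarith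

/-- **The key slab estimate \eqref{numberOfI3}.** Here `n = m + 1 ≥ 2`;
`I₁ = [δa, δ(a+1))`, `I₂ = [δb, δ(b+1))`, `I₃ = [δc, δ(c+1))`. -/
theorem isoTriples_slab_count (m : ℕ) (hm : 1 ≤ m) :
    ∃ C : ℝ, 0 < C ∧
      ∀ f : ℝ → EuclideanSpace ℝ (Fin m), LipschitzOnWith (1 / 10) f (Set.Icc 0 1) →
      ∀ δ : ℝ, IsDyadicLength δ → δ < 1 →
      ∀ k : ℕ, ∀ a b : ℤ,
        Set.Ico (δ * a) (δ * (a + 1)) ⊆ Set.Ico (0 : ℝ) 1 →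
        Set.Ico (δ * b) (δ * (b + 1)) ⊆ Set.Ico (0 : ℝ) 1 →
        (∀ s ∈ Set.Ico (δ * a) (δ * (a + 1)), ∀ t ∈ Set.Ico (δ * b) (δ * (b + 1)),
          (2 : ℝ) ^ k * δ ≤ |s - t|) →
        ({c : ℤ | ∃ x ∈ isoTriples f, x 0 ∈ Set.Ico (δ * a) (δ * (a + 1)) ∧
            x 1 ∈ Set.Ico (δ * b) (δ * (b + 1)) ∧
            x 2 ∈ Set.Ico (δ * c) (δ * (c + 1))}.ncard : ℝ) ≤
          C * ((2 : ℝ) ^ (-(k : ℤ)) * δ⁻¹ + 1) :=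
  isoTriples_slab_count_general m

end
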